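/- arXiv:1804.03863 — 5 statements merged into one kernel-verified Lean document; each statement's English description precedes it below -/
import Mathlib

section
/- Let a, b be positive integers, g = gcd(a,b), and d = a + b. Then for every integer j with 1 ≤ j ≤ d, one has ⌈j·a/d⌉ + ⌈j·b/d⌉ = j + 1 if (d/g) does not divide j, and ⌈j·a/d⌉ + ⌈j·b/d⌉ = j if (d/g) divides j. -/
/-!
With `x = j a / d` one has `j b / d = j - x`, so the sum of the two ceilings is
`j + ⌈x⌉ - ⌊x⌋`, i.e. `j + 1` unless `x` is an integer. Since `gcd (a + b) a = gcd a b = g`,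
`x` is an integer, i.e. `d ∣ j a`, exactly when `d / g ∣ j`.
-/

namespace Int

variable {R : Type*} [Ring R] [LinearOrder R] [IsStrictOrderedRing R] [FloorRing R]

theorem ceil_intCast_sub (n : ℤ) (x : R) : ⌈(n : R) - x⌉ = n - ⌊x⌋ := by
  rw [sub_eq_neg_add, ceil_add_intCast, ceil_neg, neg_add_eq_sub]

theorem ceil_add_ceil_intCast_sub_of_mem {x : R} (hx : x ∈ Set.range Int.cast) (n : ℤ) :
    ⌈x⌉ + ⌈(n : R) - x⌉ = n := by
  obtain ⟨k, rfl⟩ := hx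
  rw [ceil_intCast_sub, ceil_intCast, floor_intCast, add_sub_cancel]

theorem ceil_add_ceil_intCast_sub_of_notMem {x : R} (hx : x ∉ Set.range Int.cast) (n : ℤ) :
    ⌈x⌉ + ⌈(n : R) - x⌉ = n + 1 := by
  rw [ceil_intCast_sub, (ceil_eq_floor_add_one_iff_notMem x).mpr hx]
  ring

theorem cast_div_mem_range_intCast_iff {K : Type*} [Field K] [CharZero K] {d : ℤ} (hd : d ≠ 0)
    (m : ℤ) : (m : K) / d ∈ Set.range Int.cast ↔ d ∣ m := by
  have hdK : (d : K) ≠ 0 := cast_ne_zero.mpr hd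
  refine ⟨fun ⟨k, hk⟩ => ⟨k, ?_⟩, fun hdm => ⟨m / d, cast_div hdm hdK⟩⟩
  rw [eq_div_iff hdK] at hk
  exact_mod_cast (hk.symm.trans (mul_comm _ _))

theorem dvd_mul_iff_ediv_gcd_dvd {d a : ℤ} (hd : d ≠ 0) (j : ℤ) :
    d ∣ j * a ↔ d / d.gcd a ∣ j := by
  set g : ℤ := (d.gcd a : ℤ)
  have hg : g ≠ 0 := by simp [g, hd]
  have hcop : IsCoprime (d / g) (a / g) :=
    isCoprime_iff_gcd_eq_one.mpr (gcd_ediv_gcd_ediv_gcd_of_ne_zero_left hd)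
  calc d ∣ j * a ↔ g * (d / g) ∣ g * (j * (a / g)) := by
        rw [Int.mul_ediv_cancel' (gcd_dvd_left ..), mul_left_comm,
          Int.mul_ediv_cancel' (gcd_dvd_right ..)]
    _ ↔ d / g ∣ j * (a / g) := mul_dvd_mul_iff_left hg
    _ ↔ d / g ∣ j := ⟨hcop.dvd_of_dvd_mul_right, (·.mul_right _)⟩

end Int

theorem ceil_add_ceil_general_general (a b : ℤ)
    (g : ℤ) (hg : g = Int.gcd a b) (d : ℤ) (hd : d = a + b) :
    ∀ j : ℤ, 1 ≤ j → j ≤ d →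
      (¬ (d / g ∣ j) → ⌈(j * a : ℚ) / d⌉ + ⌈(j * b : ℚ) / d⌉ = j + 1) ∧
      ((d / g ∣ j) → ⌈(j * a : ℚ) / d⌉ + ⌈(j * b : ℚ) / d⌉ = j) := by
  intro j hj1 hjd
  have hd0 : d ≠ 0 := by omega
  have hgcd : d.gcd a = g := by rw [hg, hd, Int.gcd_self_add_left, Int.gcd_comm]
  have hsum : (j * b : ℚ) / d = j - (j * a : ℚ) / d := by
    field_simp
    push_cast [hd]
    ring
  have hint : (j * a : ℚ) / d ∈ Set.range Int.cast ↔ d / g ∣ j := by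
    rw [← hgcd, ← Int.dvd_mul_iff_ediv_gcd_dvd hd0,
      ← Int.cast_div_mem_range_intCast_iff (K := ℚ) hd0, Int.cast_mul]
  rw [hsum]
  exact ⟨fun h => Int.ceil_add_ceil_intCast_sub_of_notMem (mt hint.mp h) j,
    fun h => Int.ceil_add_ceil_intCast_sub_of_mem (hint.mpr h) j⟩

theorem ceil_add_ceil_general (a b : ℤ) (ha : 0 < a) (hb : 0 < b)
    (g : ℤ) (hg : g = Int.gcd a b) (d : ℤ) (hd : d = a + b) :
    ∀ j : ℤ, 1 ≤ j → j ≤ d →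
      (¬ (d / g ∣ j) → ⌈(j * a : ℚ) / d⌉ + ⌈(j * b : ℚ) / d⌉ = j + 1) ∧
      ((d / g ∣ j) → ⌈(j * a : ℚ) / d⌉ + ⌈(j * b : ℚ) / d⌉ = j) :=
  ceil_add_ceil_general_general a b g hg d hd
end

section
/- Let R be a commutative ℚ-algebra containing elements e₀ and e_v (v ∈ V, a finite set) satisfying e₀³ = 0, e₀·e_v = 0, e_v·e_w = 0 for v ≠ w, and e_v² = -e₀². Let L be a finite index set and for each l ∈ L set x_l = d_l·e₀ + ∑_{v∈V} m_{v,l}·e_v, where d_l and m_{v,l} are integers. Then ∏_{l∈L} (1 - x_l + x_l²) = 1 - (∑_{v∈V} M_v e_v + D e₀) + ∑_{v∈V} ((M_v² + ∑_{l∈L} m_{v,l}²)/2)·e_v² + ((D² + ∑_{l∈L} d_l²)/2)·e₀², where M_v = ∑_{l∈L} m_{v,l} and D = ∑_{l∈L} d_l. -/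
open Finset

lemma two_mul_prod {R : Type*} [CommRing R] {L : Type*} [DecidableEq L] (x : L → R)
    (h3 : ∀ l k j, x l * x k * x j = 0) (s : Finset L) :
    2 * ∏ l ∈ s, (1 - x l + x l ^ 2) =
      2 - 2 * ∑ l ∈ s, x l + (∑ l ∈ s, x l) ^ 2 + ∑ l ∈ s, x l ^ 2 := by
  induction s using Finset.induction_on with
  | empty => simp
  | @insert a s ha ih =>
    rw [Finset.prod_insert ha, Finset.sum_insert ha, Finset.sum_insert ha]
    set S := ∑ l ∈ s, x l with hS
    set Q := ∑ l ∈ s, x l ^ 2 with hQ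
    have z1 : x a * S * S = 0 := by
      simp [hS, Finset.mul_sum, Finset.sum_mul, h3]
    have z2 : x a * Q = 0 := by
      simp [hQ, Finset.mul_sum, sq, ← mul_assoc, h3]
    have z3 : x a * x a * S = 0 := by
      simp [hS, Finset.mul_sum, h3]
    have z5 : x a * x a * S * S = 0 := by rw [z3, zero_mul]
    have z6 : x a * x a * Q = 0 := by
      simp [hQ, Finset.mul_sum, sq, ← mul_assoc, h3]
    calc 2 * ((1 - x a + x a ^ 2) * ∏ l ∈ s, (1 - x l + x l ^ 2))
        = (1 - x a + x a ^ 2) * (2 * ∏ l ∈ s, (1 - x l + x l ^ 2)) := by ring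
      _ = (1 - x a + x a ^ 2) * (2 - 2 * S + S ^ 2 + Q) := by rw [ih]
      _ = 2 - 2 * (x a + S) + (x a + S) ^ 2 + (x a ^ 2 + Q) := by
          linear_combination -z1 - z2 - 2*z3 + z5 + z6

theorem inverse_chern_product (R : Type*) [CommRing R] [Algebra ℚ R]
    (V : Type*) [Fintype V] (L : Type*) [Fintype L] (e0 : R) (e : V → R)
    (h0 : e0 ^ 3 = 0) (h0v : ∀ v, e0 * e v = 0)
    (hvw : ∀ v w, v ≠ w → e v * e w = 0)
    (hv2 : ∀ v, e v ^ 2 = -e0 ^ 2)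
    (dl : L → ℤ) (m : V → L → ℤ)
    (x : L → R) (hx : ∀ l, x l = (dl l : R) * e0 + ∑ v : V, (m v l : R) * e v)
    (M : V → ℤ) (hM : ∀ v, M v = ∑ l : L, m v l)
    (D : ℤ) (hD : D = ∑ l : L, dl l) :
    ∏ l : L, (1 - x l + x l ^ 2) =
      1 - (∑ v : V, (M v : R) * e v + (D : R) * e0) +
        (∑ v : V, algebraMap ℚ R (((M v : ℚ) ^ 2 + ∑ l : L, (m v l : ℚ) ^ 2) / 2) * e v ^ 2 +
          algebraMap ℚ R (((D : ℚ) ^ 2 + ∑ l : L, (dl l : ℚ) ^ 2) / 2) * e0 ^ 2) := by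
  classical
  -- orthogonality of squares
  have ortho : ∀ c : V → R, (∑ v : V, c v * e v) ^ 2 = ∑ v : V, (c v) ^ 2 * e v ^ 2 := by
    intro c
    rw [sq, Finset.sum_mul_sum]
    refine Finset.sum_congr rfl fun v _ => ?_
    rw [Finset.sum_eq_single v]
    · ring
    · intro w _ hw
      have hz := hvw v w (fun h => hw h.symm)
      calc c v * e v * (c w * e w) = c v * c w * (e v * e w) := by ring
        _ = 0 := by rw [hz, mul_zero]
    · intro h; exact absurd (Finset.mem_univ v) h
  have he0v : ∀ c : V → R, e0 * ∑ v : V, c v * e v = 0 := by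
    intro c
    rw [Finset.mul_sum]
    refine Finset.sum_eq_zero fun v _ => ?_
    calc e0 * (c v * e v) = c v * (e0 * e v) := by ring
      _ = 0 := by rw [h0v, mul_zero]
  -- product of two x's
  have hxx : ∀ l k, x l * x k =
      (dl l : R) * (dl k : R) * e0 ^ 2 + ∑ v : V, (m v l : R) * (m v k : R) * e v ^ 2 := by
    intro l k
    rw [hx l, hx k]
    have h1 := he0v (fun v => (m v k : R))
    have h2 := he0v (fun v => (m v l : R))
    have h3 : (∑ v : V, (m v l : R) * e v) * (∑ v : V, (m v k : R) * e v)
        = ∑ v : V, (m v l : R) * (m v k : R) * e v ^ 2 := by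
      rw [Finset.sum_mul_sum]
      refine Finset.sum_congr rfl fun v _ => ?_
      rw [Finset.sum_eq_single v]
      · ring
      · intro w _ hw
        have hz := hvw v w (fun h => hw h.symm)
        calc (m v l : R) * e v * ((m w k : R) * e w)
            = (m v l : R) * (m w k : R) * (e v * e w) := by ring
          _ = 0 := by rw [hz, mul_zero]
      · intro h; exact absurd (Finset.mem_univ v) h
    linear_combination (dl l : R) * h1 + (dl k : R) * h2 + h3
  -- e0^2 and e v^2 kill any x
  have he0sq : ∀ j, e0 ^ 2 * x j = 0 := by
    intro j
    rw [hx j, mul_add, Finset.mul_sum]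
    have h1 : e0 ^ 2 * ((dl j : R) * e0) = (dl j : R) * e0 ^ 3 := by ring
    rw [h1, h0, mul_zero, zero_add]
    refine Finset.sum_eq_zero fun v _ => ?_
    linear_combination ((m v j : R) * e0) * (h0v v)
  have hevsq : ∀ v j, e v ^ 2 * x j = 0 := by
    intro v j
    rw [hv2 v, neg_mul, he0sq, neg_zero]
  -- triple products vanish
  have htriple : ∀ l k j, x l * x k * x j = 0 := by
    intro l k j
    rw [hxx l k, add_mul, Finset.sum_mul]
    have h1 : (dl l : R) * (dl k : R) * e0 ^ 2 * x j = 0 := by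
      linear_combination ((dl l : R) * (dl k : R)) * he0sq j
    rw [h1, zero_add]
    refine Finset.sum_eq_zero fun v _ => ?_
    linear_combination ((m v l : R) * (m v k : R)) * hevsq v j
  -- value of S
  have hd1 : ∑ l : L, (dl l : R) * e0 = (D : R) * e0 := by
    rw [hD, ← Finset.sum_mul]; push_cast; ring
  have hm1 : ∀ v, ∑ l : L, (m v l : R) * e v = (M v : R) * e v := by
    intro v; rw [hM v, ← Finset.sum_mul]; push_cast; ring
  have hSval : ∑ l : L, x l = (D : R) * e0 + ∑ v : V, (M v : R) * e v := by
    calc ∑ l : L, x l = ∑ l : L, ((dl l : R) * e0 + ∑ v : V, (m v l : R) * e v) := by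
          exact Finset.sum_congr rfl fun l _ => hx l
      _ = (∑ l : L, (dl l : R) * e0) + ∑ v : V, ∑ l : L, (m v l : R) * e v := by
          rw [Finset.sum_add_distrib, Finset.sum_comm]
      _ = (D : R) * e0 + ∑ v : V, (M v : R) * e v := by
          rw [hd1]
          exact congrArg _ (Finset.sum_congr rfl fun v _ => hm1 v)
  have hSsq : (∑ l : L, x l) ^ 2 = (D : R) ^ 2 * e0 ^ 2 + ∑ v : V, (M v : R) ^ 2 * e v ^ 2 := by
    rw [hSval]
    linear_combination (2 * (D : R)) * (he0v fun v => (M v : R)) + ortho (fun v => (M v : R))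
  have hQval : ∑ l : L, x l ^ 2
      = (∑ l : L, (dl l : R) ^ 2) * e0 ^ 2 + ∑ v : V, (∑ l : L, (m v l : R) ^ 2) * e v ^ 2 := by
    have hsq : ∀ l, x l ^ 2 = (dl l : R) ^ 2 * e0 ^ 2 + ∑ v : V, (m v l : R) ^ 2 * e v ^ 2 := by
      intro l
      rw [sq, hxx l l]
      congr 1
      · ring
      · exact Finset.sum_congr rfl fun v _ => by ring
    calc ∑ l : L, x l ^ 2
        = ∑ l : L, ((dl l : R) ^ 2 * e0 ^ 2 + ∑ v : V, (m v l : R) ^ 2 * e v ^ 2) := by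
          exact Finset.sum_congr rfl fun l _ => hsq l
      _ = (∑ l : L, (dl l : R) ^ 2 * e0 ^ 2) + ∑ v : V, ∑ l : L, (m v l : R) ^ 2 * e v ^ 2 := by
          rw [Finset.sum_add_distrib, Finset.sum_comm]
      _ = (∑ l : L, (dl l : R) ^ 2) * e0 ^ 2 + ∑ v : V, (∑ l : L, (m v l : R) ^ 2) * e v ^ 2 := by
          rw [Finset.sum_mul]
          exact congrArg _ (Finset.sum_congr rfl fun v _ => by rw [Finset.sum_mul])
  -- divide by 2
  set h : R := algebraMap ℚ R (1/2) with hh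
  have h2 : h * 2 = 1 := by
    rw [hh, show (2 : R) = algebraMap ℚ R 2 from (map_ofNat (algebraMap ℚ R) 2).symm, ← map_mul]
    norm_num
  have key := two_mul_prod x htriple Finset.univ
  have hcast1 : algebraMap ℚ R (((D : ℚ) ^ 2 + ∑ l : L, (dl l : ℚ) ^ 2) / 2)
      = h * ((D : R) ^ 2 + ∑ l : L, (dl l : R) ^ 2) := by
    rw [show ((D : ℚ) ^ 2 + ∑ l : L, (dl l : ℚ) ^ 2) / 2
        = (1/2 : ℚ) * ((D : ℚ) ^ 2 + ∑ l : L, (dl l : ℚ) ^ 2) by ring, map_mul, hh]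
    congr 1
    push_cast [map_add, map_pow, map_sum, map_intCast]
    ring
  have hcastv : ∀ v : V, algebraMap ℚ R (((M v : ℚ) ^ 2 + ∑ l : L, (m v l : ℚ) ^ 2) / 2)
      = h * ((M v : R) ^ 2 + ∑ l : L, (m v l : R) ^ 2) := by
    intro v
    rw [show ((M v : ℚ) ^ 2 + ∑ l : L, (m v l : ℚ) ^ 2) / 2
        = (1/2 : ℚ) * ((M v : ℚ) ^ 2 + ∑ l : L, (m v l : ℚ) ^ 2) by ring, map_mul, hh]
    congr 1
    push_cast [map_add, map_pow, map_sum, map_intCast]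
    ring
  have hsumv : ∑ v : V, (h * ((M v : R) ^ 2 + ∑ l : L, (m v l : R) ^ 2)) * e v ^ 2
      = h * (∑ v : V, (M v : R) ^ 2 * e v ^ 2 + ∑ v : V, (∑ l : L, (m v l : R) ^ 2) * e v ^ 2) := by
    rw [mul_add, Finset.mul_sum, Finset.mul_sum, ← Finset.sum_add_distrib]
    exact Finset.sum_congr rfl fun v _ => by ring
  calc ∏ l : L, (1 - x l + x l ^ 2)
      = (h * 2) * ∏ l : L, (1 - x l + x l ^ 2) := by rw [h2, one_mul]
    _ = h * (2 * ∏ l : L, (1 - x l + x l ^ 2)) := by ring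
    _ = h * (2 - 2 * ∑ l : L, x l + (∑ l : L, x l) ^ 2 + ∑ l : L, x l ^ 2) := by rw [key]
    _ = h * (2 - 2 * ((D : R) * e0 + ∑ v : V, (M v : R) * e v)
          + ((D : R) ^ 2 * e0 ^ 2 + ∑ v : V, (M v : R) ^ 2 * e v ^ 2)
          + ((∑ l : L, (dl l : R) ^ 2) * e0 ^ 2
            + ∑ v : V, (∑ l : L, (m v l : R) ^ 2) * e v ^ 2)) := by
        rw [hSsq, hQval, hSval]
    _ = 1 - (∑ v : V, (M v : R) * e v + (D : R) * e0) +
        (∑ v : V, algebraMap ℚ R (((M v : ℚ) ^ 2 + ∑ l : L, (m v l : ℚ) ^ 2) / 2) * e v ^ 2 +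
          algebraMap ℚ R (((D : ℚ) ^ 2 + ∑ l : L, (dl l : ℚ) ^ 2) / 2) * e0 ^ 2) := by
        rw [hcast1, show ∑ v : V, algebraMap ℚ R (((M v : ℚ) ^ 2 + ∑ l : L, (m v l : ℚ) ^ 2) / 2) * e v ^ 2
            = ∑ v : V, (h * ((M v : R) ^ 2 + ∑ l : L, (m v l : R) ^ 2)) * e v ^ 2
          from Finset.sum_congr rfl fun v _ => by rw [hcastv v], hsumv]
        linear_combination (1 - ((D : R) * e0 + ∑ v : V, (M v : R) * e v)) * h2
end

section
/- Let R be a commutative ℚ-algebra with elements e₀, e_v (v ∈ V finite) satisfying e₀³ = 0, e₀·e_v = 0, e_v·e_w = 0 for v ≠ w, and e_v² = -e₀², with a ℚ-linear functional ∫ satisfying ∫(e₀²) = 1 and ∫ vanishing on 1, e₀, and each e_v. Let d_red, u₀ and, for each v ∈ V, m_v, u_v be integers. Set ch₂ = 1 - (∑_v (m_v - 2)e_v + (d_red - 3)e₀) + (∑_v (m_v - 2)²·e_v² + (d_red - 3)²·e₀²)/2 and ch_U = 1 + (u₀e₀ + ∑_v u_v e_v) + (u₀²e₀² + ∑_v u_v²e_v²)/2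 and Td = 1 - (∑_v e_v + 3e₀)/2 + e₀². Then ∫(ch₂ · ch_U · Td) = C(d_red - u₀ - 1, 2) - ∑_{v∈V} C(m_v - u_v - 1, 2), where C(t,2) = t(t-1)/2 for any integer t. -/
open Finset

/-- The generalized binomial coefficient C(t,2) = t(t-1)/2 for an integer t. -/
def C2 (t : ℤ) : ℚ := t * (t - 1) / 2

theorem chi_two_formula (R : Type*) [CommRing R] [Algebra ℚ R]
    (V : Type*) [Fintype V] (e0 : R) (e : V → R)
    (h0 : e0 ^ 3 = 0) (h0v : ∀ v, e0 * e v = 0)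
    (hvw : ∀ v w, v ≠ w → e v * e w = 0)
    (hv2 : ∀ v, e v ^ 2 = -e0 ^ 2)
    (I : R →ₗ[ℚ] ℚ) (hI2 : I (e0 ^ 2) = 1) (hI1 : I 1 = 0) (hI0 : I e0 = 0)
    (hIv : ∀ v, I (e v) = 0)
    (dred u0 : ℤ) (m u : V → ℤ)
    (ch2 chU Td : R)
    (hch2 : ch2 = 1 - (∑ v : V, ((m v : R) - 2) * e v + ((dred : R) - 3) * e0) +
      (1 / 2 : ℚ) • (∑ v : V, ((m v : R) - 2) ^ 2 * e v ^ 2 + ((dred : R) - 3) ^ 2 * e0 ^ 2))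
    (hchU : chU = 1 + ((u0 : R) * e0 + ∑ v : V, (u v : R) * e v) +
      (1 / 2 : ℚ) • ((u0 : R) ^ 2 * e0 ^ 2 + ∑ v : V, (u v : R) ^ 2 * e v ^ 2))
    (hTd : Td = 1 - (1 / 2 : ℚ) • (∑ v : V, e v + 3 * e0) + e0 ^ 2) :
    I (ch2 * chU * Td) =
      C2 (dred - u0 - 1) - ∑ v : V, C2 (m v - u v - 1) := by
  classical
  -- basic vanishing lemmas
  have h03 : e0 ^ 2 * e0 = 0 := by rw [← pow_succ]; exact h0
  have h04 : e0 ^ 2 * e0 ^ 2 = 0 := by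
    calc e0 ^ 2 * e0 ^ 2 = e0 ^ 2 * e0 * e0 := by ring
      _ = 0 := by rw [h03, zero_mul]
  have h02v : ∀ v, e0 ^ 2 * e v = 0 := fun v => by
    rw [pow_two, mul_assoc, h0v, mul_zero]
  have hv2x : ∀ (v : V) (x : R), e0 ^ 2 * x = 0 → e v ^ 2 * x = 0 := fun v x h => by
    rw [hv2 v, neg_mul, h, neg_zero]
  have h02sq : ∀ v, e0 ^ 2 * e v ^ 2 = 0 := fun v => by
    rw [mul_comm]; exact hv2x v _ h04
  have hLin0 : ∀ c : V → R, e0 * (∑ v : V, c v * e v) = 0 := by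
    intro c; rw [Finset.mul_sum]
    exact Finset.sum_eq_zero fun v _ => by rw [mul_left_comm, h0v, mul_zero]
  have hLinE : e0 * (∑ v : V, e v) = 0 := by
    rw [Finset.mul_sum]; exact Finset.sum_eq_zero fun v _ => h0v v
  have h02L : ∀ c : V → R, e0 ^ 2 * (∑ v : V, c v * e v) = 0 := by
    intro c; rw [Finset.mul_sum]
    exact Finset.sum_eq_zero fun v _ => by rw [mul_left_comm, h02v, mul_zero]
  have h02E : e0 ^ 2 * (∑ v : V, e v) = 0 := by
    rw [Finset.mul_sum]; exact Finset.sum_eq_zero fun v _ => h02v v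
  have h02Q : ∀ c : V → R, e0 ^ 2 * (∑ v : V, c v * e v ^ 2) = 0 := by
    intro c; rw [Finset.mul_sum]
    exact Finset.sum_eq_zero fun v _ => by rw [mul_left_comm, h02sq, mul_zero]
  have hQmul : ∀ (c : V → R) (x : R), e0 ^ 2 * x = 0 → (∑ v : V, c v * e v ^ 2) * x = 0 := by
    intro c x h; rw [Finset.sum_mul]
    exact Finset.sum_eq_zero fun v _ => by rw [mul_assoc, hv2x v x h, mul_zero]
  -- products of linear sums
  have mulSS : ∀ c d : V → R,
      (∑ v : V, c v * e v) * (∑ v : V, d v * e v) = ∑ v : V, c v * d v * e v ^ 2 := by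
    intro c d
    rw [Finset.sum_mul_sum]
    refine Finset.sum_congr rfl fun v _ => ?_
    rw [Finset.sum_eq_single v
      (fun w _ hw => by rw [mul_mul_mul_comm, hvw v w (Ne.symm hw), mul_zero])
      (fun hv => absurd (Finset.mem_univ v) hv)]
    ring
  have mulSE : ∀ c : V → R,
      (∑ v : V, c v * e v) * (∑ v : V, e v) = ∑ v : V, c v * e v ^ 2 := by
    intro c
    rw [Finset.sum_mul_sum]
    refine Finset.sum_congr rfl fun v _ => ?_
    rw [Finset.sum_eq_single v
      (fun w _ hw => by rw [mul_assoc, hvw v w (Ne.symm hw), mul_zero])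
      (fun hv => absurd (Finset.mem_univ v) hv)]
    ring
  -- named vanishing instances
  have zS1e0 : e0 * (∑ v : V, ((m v : R) - 2) * e v) = 0 := hLin0 _
  have zT1e0 : e0 * (∑ v : V, (u v : R) * e v) = 0 := hLin0 _
  have z2S1 : e0 ^ 2 * (∑ v : V, ((m v : R) - 2) * e v) = 0 := h02L _
  have z2T1 : e0 ^ 2 * (∑ v : V, (u v : R) * e v) = 0 := h02L _
  have z2T2 : e0 ^ 2 * (∑ v : V, (u v : R) ^ 2 * e v ^ 2) = 0 := h02Q _
  have zS2e0 : (∑ v : V, ((m v : R) - 2) ^ 2 * e v ^ 2) * e0 = 0 := hQmul _ _ h03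
  have zS2e02 : (∑ v : V, ((m v : R) - 2) ^ 2 * e v ^ 2) * e0 ^ 2 = 0 := hQmul _ _ h04
  have zS2T1 : (∑ v : V, ((m v : R) - 2) ^ 2 * e v ^ 2) * (∑ v : V, (u v : R) * e v) = 0 := hQmul _ _ z2T1
  have zS2E1 : (∑ v : V, ((m v : R) - 2) ^ 2 * e v ^ 2) * (∑ v : V, e v) = 0 := hQmul _ _ h02E
  have zS2T2 : (∑ v : V, ((m v : R) - 2) ^ 2 * e v ^ 2) * (∑ v : V, (u v : R) ^ 2 * e v ^ 2) = 0 := hQmul _ _ z2T2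
  have zT2e0 : (∑ v : V, (u v : R) ^ 2 * e v ^ 2) * e0 = 0 := hQmul _ _ h03
  have zT2e02 : (∑ v : V, (u v : R) ^ 2 * e v ^ 2) * e0 ^ 2 = 0 := hQmul _ _ h04
  have zT2S1 : (∑ v : V, (u v : R) ^ 2 * e v ^ 2) * (∑ v : V, ((m v : R) - 2) * e v) = 0 := hQmul _ _ z2S1
  have zT2E1 : (∑ v : V, (u v : R) ^ 2 * e v ^ 2) * (∑ v : V, e v) = 0 := hQmul _ _ h02E
  have zWe0 : (∑ v : V, ((m v : R) - 2) * (u v : R) * e v ^ 2) * e0 = 0 := hQmul _ _ h03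
  have zWe02 : (∑ v : V, ((m v : R) - 2) * (u v : R) * e v ^ 2) * e0 ^ 2 = 0 := hQmul _ _ h04
  have zWE1 : (∑ v : V, ((m v : R) - 2) * (u v : R) * e v ^ 2) * (∑ v : V, e v) = 0 := hQmul _ _ h02E
  -- diagonal products
  have hS1T1 : (∑ v : V, ((m v : R) - 2) * e v) * (∑ v : V, (u v : R) * e v) = (∑ v : V, ((m v : R) - 2) * (u v : R) * e v ^ 2) := mulSS _ _
  have hS1E1 : (∑ v : V, ((m v : R) - 2) * e v) * (∑ v : V, e v) = (∑ v : V, ((m v : R) - 2) * e v ^ 2) := mulSE _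
  have hT1E1 : (∑ v : V, (u v : R) * e v) * (∑ v : V, e v) = (∑ v : V, (u v : R) * e v ^ 2) := mulSE _
  -- the three surviving quadratic products
  have hPP' : ((∑ v : V, ((m v : R) - 2) * e v) + ((dred : R) - 3) * e0) * ((u0 : R) * e0 + (∑ v : V, (u v : R) * e v)) = (∑ v : V, ((m v : R) - 2) * (u v : R) * e v ^ 2) + ((dred : R) - 3) * (u0 : R) * e0 ^ 2 := by
    linear_combination hS1T1 + (u0 : R) * zS1e0 + ((dred : R) - 3) * zT1e0
  have hPP'' : ((∑ v : V, ((m v : R) - 2) * e v) + ((dred : R) - 3) * e0) * ((∑ v : V, e v) + 3 * e0) = (∑ v : V, ((m v : R) - 2) * e v ^ 2) + ((dred : R) - 3) * 3 * e0 ^ 2 := by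
    linear_combination hS1E1 + 3 * zS1e0 + ((dred : R) - 3) * hLinE
  have hP'P'' : ((u0 : R) * e0 + (∑ v : V, (u v : R) * e v)) * ((∑ v : V, e v) + 3 * e0) = (∑ v : V, (u v : R) * e v ^ 2) + (u0 : R) * 3 * e0 ^ 2 := by
    linear_combination hT1E1 + 3 * zT1e0 + (u0 : R) * hLinE
  -- vanishing higher-degree products
  have Z1 : ((∑ v : V, ((m v : R) - 2) * e v) + ((dred : R) - 3) * e0) * ((u0 : R) ^ 2 * e0 ^ 2 + (∑ v : V, (u v : R) ^ 2 * e v ^ 2)) = 0 := by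
    linear_combination (u0 : R) ^ 2 * z2S1 + zT2S1 + ((dred : R) - 3) * (u0 : R) ^ 2 * h03 + ((dred : R) - 3) * zT2e0
  have Z2 : ((∑ v : V, ((m v : R) - 2) ^ 2 * e v ^ 2) + ((dred : R) - 3) ^ 2 * e0 ^ 2) * ((u0 : R) * e0 + (∑ v : V, (u v : R) * e v)) = 0 := by
    linear_combination (u0 : R) * zS2e0 + zS2T1 + ((dred : R) - 3) ^ 2 * (u0 : R) * h03 + ((dred : R) - 3) ^ 2 * z2T1
  have Z3 : ((∑ v : V, ((m v : R) - 2) ^ 2 * e v ^ 2) + ((dred : R) - 3) ^ 2 * e0 ^ 2) * ((u0 : R) ^ 2 * e0 ^ 2 + (∑ v : V, (u v : R) ^ 2 * e v ^ 2)) = 0 := by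
    linear_combination (u0 : R) ^ 2 * zS2e02 + zS2T2 + ((dred : R) - 3) ^ 2 * (u0 : R) ^ 2 * h04 + ((dred : R) - 3) ^ 2 * z2T2
  have Z4 : ((∑ v : V, ((m v : R) - 2) ^ 2 * e v ^ 2) + ((dred : R) - 3) ^ 2 * e0 ^ 2) * ((∑ v : V, e v) + 3 * e0) = 0 := by
    linear_combination zS2E1 + 3 * zS2e0 + ((dred : R) - 3) ^ 2 * h02E + 3 * ((dred : R) - 3) ^ 2 * h03
  have Z5 : ((∑ v : V, ((m v : R) - 2) ^ 2 * e v ^ 2) + ((dred : R) - 3) ^ 2 * e0 ^ 2) * e0 ^ 2 = 0 := by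
    linear_combination zS2e02 + ((dred : R) - 3) ^ 2 * h04
  have Z6 : ((u0 : R) ^ 2 * e0 ^ 2 + (∑ v : V, (u v : R) ^ 2 * e v ^ 2)) * ((∑ v : V, e v) + 3 * e0) = 0 := by
    linear_combination (u0 : R) ^ 2 * h02E + 3 * (u0 : R) ^ 2 * h03 + zT2E1 + 3 * zT2e0
  have Z7 : ((u0 : R) ^ 2 * e0 ^ 2 + (∑ v : V, (u v : R) ^ 2 * e v ^ 2)) * e0 ^ 2 = 0 := by
    linear_combination (u0 : R) ^ 2 * h04 + zT2e02
  have Z8 : ((∑ v : V, ((m v : R) - 2) * e v) + ((dred : R) - 3) * e0) * ((u0 : R) * e0 + (∑ v : V, (u v : R) * e v)) * ((∑ v : V, e v) + 3 * e0) = 0 := by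
    linear_combination ((∑ v : V, e v) + 3 * e0) * hPP' + zWE1 + 3 * zWe0 + ((dred : R) - 3) * (u0 : R) * h02E +
      3 * ((dred : R) - 3) * (u0 : R) * h03
  have Z9 : ((∑ v : V, ((m v : R) - 2) * e v) + ((dred : R) - 3) * e0) * ((u0 : R) * e0 + (∑ v : V, (u v : R) * e v)) * e0 ^ 2 = 0 := by
    linear_combination e0 ^ 2 * hPP' + zWe02 + ((dred : R) - 3) * (u0 : R) * h04
  have Z10 : ((∑ v : V, ((m v : R) - 2) * e v) + ((dred : R) - 3) * e0) * e0 ^ 2 = 0 := by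
    linear_combination z2S1 + ((dred : R) - 3) * h03
  have Z11 : ((u0 : R) * e0 + (∑ v : V, (u v : R) * e v)) * e0 ^ 2 = 0 := by
    linear_combination (u0 : R) * h03 + z2T1
  -- full expansion of the product
  have hfull : ch2 * chU * Td =
      1 - (∑ v : V, ((m v : R) - 2) * e v) - ((dred : ℚ) - 3) • e0 + (u0 : ℚ) • e0 + (∑ v : V, (u v : R) * e v)
      - (1 / 2 : ℚ) • (∑ v : V, e v) - ((3 : ℚ) * (1 / 2 : ℚ)) • e0 + e0 ^ 2
      + (1 / 2 : ℚ) • (∑ v : V, ((m v : R) - 2) ^ 2 * e v ^ 2) + (((dred : ℚ) - 3) ^ 2 * (1 / 2 : ℚ)) • e0 ^ 2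
      + ((u0 : ℚ) ^ 2 * (1 / 2 : ℚ)) • e0 ^ 2 + (1 / 2 : ℚ) • (∑ v : V, (u v : R) ^ 2 * e v ^ 2)
      - (∑ v : V, ((m v : R) - 2) * (u v : R) * e v ^ 2) - (((dred : ℚ) - 3) * (u0 : ℚ)) • e0 ^ 2
      + (1 / 2 : ℚ) • (∑ v : V, ((m v : R) - 2) * e v ^ 2) + (((dred : ℚ) - 3) * (3 : ℚ) * (1 / 2 : ℚ)) • e0 ^ 2
      - (1 / 2 : ℚ) • (∑ v : V, (u v : R) * e v ^ 2) - ((u0 : ℚ) * (3 : ℚ) * (1 / 2 : ℚ)) • e0 ^ 2 := by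
    rw [hch2, hchU, hTd]
    simp only [Algebra.smul_def, map_mul, map_pow, map_sub, map_intCast, map_ofNat]
    linear_combination (-1 : R) * hPP' + ((algebraMap ℚ R) (1 / 2 : ℚ)) * hPP'' - ((algebraMap ℚ R) (1 / 2 : ℚ)) * hP'P''
      + ((algebraMap ℚ R) (1 / 2 : ℚ)) * Z8 - Z9 + (((algebraMap ℚ R) (1 / 2 : ℚ)) ^ 2 * ((∑ v : V, e v) + 3 * e0) - ((algebraMap ℚ R) (1 / 2 : ℚ)) * e0 ^ 2 - ((algebraMap ℚ R) (1 / 2 : ℚ))) * Z1 - Z10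
      + (((algebraMap ℚ R) (1 / 2 : ℚ)) - ((algebraMap ℚ R) (1 / 2 : ℚ)) ^ 2 * ((∑ v : V, e v) + 3 * e0) + ((algebraMap ℚ R) (1 / 2 : ℚ)) * e0 ^ 2) * Z2
      + (((algebraMap ℚ R) (1 / 2 : ℚ)) ^ 2 - ((algebraMap ℚ R) (1 / 2 : ℚ)) ^ 3 * ((∑ v : V, e v) + 3 * e0) + ((algebraMap ℚ R) (1 / 2 : ℚ)) ^ 2 * e0 ^ 2) * Z3
      - ((algebraMap ℚ R) (1 / 2 : ℚ)) ^ 2 * Z4 + ((algebraMap ℚ R) (1 / 2 : ℚ)) * Z5 - ((algebraMap ℚ R) (1 / 2 : ℚ)) ^ 2 * Z6 + ((algebraMap ℚ R) (1 / 2 : ℚ)) * Z7 + Z11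
  -- applying the linear functional
  have hIsm : ∀ (q : ℚ) (x : R), I ((algebraMap ℚ R) q * x) = q * I x := fun q x => by
    rw [← Algebra.smul_def, map_smul, smul_eq_mul]
  have hcm : ∀ v, ((m v : R) - 2) = (algebraMap ℚ R) ((m v : ℚ) - 2) := fun v => by
    rw [map_sub, map_intCast, map_ofNat]
  have hcu : ∀ v, ((u v : R)) = (algebraMap ℚ R) ((u v : ℚ)) := fun v =>
    (map_intCast _ _).symm
  have hIev2 : ∀ v, I (e v ^ 2) = -1 := fun v => by rw [hv2 v, map_neg, hI2]
  have hIS1 : I (∑ v : V, ((m v : R) - 2) * e v) = 0 := by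
    rw [map_sum]; exact Finset.sum_eq_zero fun v _ => by rw [hcm v, hIsm, hIv v, mul_zero]
  have hIT1 : I (∑ v : V, (u v : R) * e v) = 0 := by
    rw [map_sum]; exact Finset.sum_eq_zero fun v _ => by rw [hcu v, hIsm, hIv v, mul_zero]
  have hIE1 : I (∑ v : V, e v) = 0 := by
    rw [map_sum]; exact Finset.sum_eq_zero fun v _ => hIv v
  have hIS2 : I (∑ v : V, ((m v : R) - 2) ^ 2 * e v ^ 2) = -(∑ v : V, ((m v : ℚ) - 2) ^ 2) := by
    rw [map_sum, ← Finset.sum_neg_distrib]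
    refine Finset.sum_congr rfl fun v _ => ?_
    rw [hcm v, ← map_pow, hIsm, hIev2 v]; ring
  have hIT2 : I (∑ v : V, (u v : R) ^ 2 * e v ^ 2) = -(∑ v : V, (u v : ℚ) ^ 2) := by
    rw [map_sum, ← Finset.sum_neg_distrib]
    refine Finset.sum_congr rfl fun v _ => ?_
    rw [hcu v, ← map_pow, hIsm, hIev2 v]; ring
  have hIW : I (∑ v : V, ((m v : R) - 2) * (u v : R) * e v ^ 2) = -(∑ v : V, ((m v : ℚ) - 2) * (u v : ℚ)) := by
    rw [map_sum, ← Finset.sum_neg_distrib]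
    refine Finset.sum_congr rfl fun v _ => ?_
    rw [hcm v, hcu v, ← map_mul, hIsm, hIev2 v]; ring
  have hIWa : I (∑ v : V, ((m v : R) - 2) * e v ^ 2) = -(∑ v : V, ((m v : ℚ) - 2)) := by
    rw [map_sum, ← Finset.sum_neg_distrib]
    refine Finset.sum_congr rfl fun v _ => ?_
    rw [hcm v, hIsm, hIev2 v]; ring
  have hIWu : I (∑ v : V, (u v : R) * e v ^ 2) = -(∑ v : V, (u v : ℚ)) := by
    rw [map_sum, ← Finset.sum_neg_distrib]
    refine Finset.sum_congr rfl fun v _ => ?_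
    rw [hcu v, hIsm, hIev2 v]; ring
  -- the binomial side
  have hC0 : C2 (dred - u0 - 1) =
      ((dred : ℚ) - (u0 : ℚ) - 1) * ((dred : ℚ) - (u0 : ℚ) - 2) / 2 := by
    simp only [C2]; push_cast; ring
  have hCsum : ∑ v : V, C2 (m v - u v - 1) =
      (1 / 2 : ℚ) * (∑ v : V, ((m v : ℚ) - 2) ^ 2) + (1 / 2 : ℚ) * (∑ v : V, (u v : ℚ) ^ 2)
      - (∑ v : V, ((m v : ℚ) - 2) * (u v : ℚ)) + (1 / 2 : ℚ) * (∑ v : V, ((m v : ℚ) - 2))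
      - (1 / 2 : ℚ) * (∑ v : V, (u v : ℚ)) := by
    rw [Finset.mul_sum, Finset.mul_sum, Finset.mul_sum, Finset.mul_sum,
      ← Finset.sum_add_distrib, ← Finset.sum_sub_distrib, ← Finset.sum_add_distrib,
      ← Finset.sum_sub_distrib]
    refine Finset.sum_congr rfl fun v _ => ?_
    simp only [C2]; push_cast; ring
  rw [hfull]
  simp only [map_add, map_sub, map_smul, smul_eq_mul, hI1, hI0, hI2, hIS1, hIT1, hIE1,
    hIS2, hIT2, hIW, hIWa, hIWu]
  rw [hC0, hCsum]
  ring
end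

section
/- Let R be a commutative ℚ-algebra with elements e₀, e_v (v ∈ V finite) satisfying e₀³ = 0, e₀·e_v = 0, e_v·e_w = 0 for v ≠ w, and e_v² = -e₀², with a ℚ-linear functional ∫ satisfying ∫(e₀²) = 1 and ∫ vanishing on 1, e₀, and each e_v. Let L be a finite set and let d_l (l ∈ L), m_{v,l} (v ∈ V, l ∈ L), u₀, u_v be integers; set d_red = ∑_l d_l and m_v = ∑_l m_{v,l}. Set ch₁ = 2 - (∑_v (m_v - 2)e_v + (d_red - 3)e₀) + ∑_v ((2 - ∑_l m_{v,l}²)/2)e_v² + ((3 - ∑_l d_l²)/2)e₀², ch_U = 1 + (u₀e₀ + ∑_v u_v e_v) + (u₀²e₀² + ∑_v u_v²e_v²)/2, and Td = 1 - (∑_v e_v + 3e₀)/2 + e₀². Then ∫(ch₁ · ch_U · Td) = -(u₀ - 1)(d_red - u₀ - 1) + ∑_{v∈V} u_v(m_v - u_v - 1) - ∑_{l∈L} C(d_l, 2) + ∑_{v∈V} ∑_{l∈L} C(m_{v,l}, 2), where C(t,2) = t(t-1)/2. -/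
open Finset

section NFsec
variable {R : Type*} [CommRing R] [Algebra ℚ R] {V : Type*} [Fintype V]

/-- Normal form element. -/
def NF (e0 : R) (e : V → R) (a b : ℚ) (c : V → ℚ) (d : ℚ) : R :=
  algebraMap ℚ R a + algebraMap ℚ R b * e0 + (∑ v, algebraMap ℚ R (c v) * e v) +
    algebraMap ℚ R d * e0 ^ 2

theorem NF_mul (e0 : R) (e : V → R) (h0 : e0 ^ 3 = 0) (h0v : ∀ v, e0 * e v = 0)
    (hvw : ∀ v w, v ≠ w → e v * e w = 0) (hv2 : ∀ v, e v ^ 2 = -e0 ^ 2)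
    (a b d a' b' d' : ℚ) (c c' : V → ℚ) :
    NF e0 e a b c d * NF e0 e a' b' c' d' =
      NF e0 e (a * a') (a * b' + b * a') (fun v => a * c' v + c v * a')
        (a * d' + d * a' + b * b' - ∑ v, c v * c' v) := by
  have A := algebraMap ℚ R
  set S : R := ∑ v, algebraMap ℚ R (c v) * e v with hS
  set S' : R := ∑ v, algebraMap ℚ R (c' v) * e v with hS'
  have hsqv : ∀ v, e0 ^ 2 * e v = 0 := fun v => by rw [sq, mul_assoc, h0v, mul_zero]
  have hz1 : e0 ^ 2 * e0 = 0 := by rw [← pow_succ]; exact h0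
  have hz2 : e0 ^ 2 * e0 ^ 2 = 0 := by linear_combination e0 * hz1
  have hq1 : e0 * S = 0 := by
    rw [hS, Finset.mul_sum]
    exact Finset.sum_eq_zero fun v _ => by rw [mul_left_comm, h0v, mul_zero]
  have hq1' : e0 * S' = 0 := by
    rw [hS', Finset.mul_sum]
    exact Finset.sum_eq_zero fun v _ => by rw [mul_left_comm, h0v, mul_zero]
  have hq2 : e0 ^ 2 * S = 0 := by
    rw [hS, Finset.mul_sum]
    exact Finset.sum_eq_zero fun v _ => by rw [mul_left_comm, hsqv, mul_zero]
  have hq2' : e0 ^ 2 * S' = 0 := by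
    rw [hS', Finset.mul_sum]
    exact Finset.sum_eq_zero fun v _ => by rw [mul_left_comm, hsqv, mul_zero]
  have hSS : S * S' = algebraMap ℚ R (∑ v, c v * c' v) * (-e0 ^ 2) := by
    rw [hS, hS', Fintype.sum_mul_sum]
    rw [map_sum, Finset.sum_mul]
    refine Finset.sum_congr rfl fun v _ => ?_
    rw [Finset.sum_eq_single v
      (fun w _ hw => by rw [mul_mul_mul_comm, hvw v w (Ne.symm hw), mul_zero])
      (fun h => absurd (Finset.mem_univ v) h)]
    rw [map_mul]; linear_combination (algebraMap ℚ R (c v) * algebraMap ℚ R (c' v)) * hv2 v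
  have hT : (∑ v, algebraMap ℚ R (a * c' v + c v * a') * e v)
      = algebraMap ℚ R a * S' + algebraMap ℚ R a' * S := by
    rw [hS, hS', Finset.mul_sum, Finset.mul_sum, ← Finset.sum_add_distrib]
    refine Finset.sum_congr rfl fun v _ => ?_
    rw [map_add, add_mul, map_mul, map_mul]; ring
  simp only [NF, ← hS, ← hS', hT]
  rw [map_mul, map_add (algebraMap ℚ R) (a*b'), map_mul, map_mul,
    map_sub, map_add, map_add, map_mul, map_mul, map_mul]
  linear_combination (algebraMap ℚ R b) * hq1' + (algebraMap ℚ R b') * hq1 + hSS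
    + (algebraMap ℚ R b * algebraMap ℚ R d') * hz1
    + (algebraMap ℚ R d * algebraMap ℚ R b') * hz1
    + (algebraMap ℚ R d') * hq2 + (algebraMap ℚ R d) * hq2'
    + (algebraMap ℚ R d * algebraMap ℚ R d') * hz2

theorem I_NF (e0 : R) (e : V → R) (I : R →ₗ[ℚ] ℚ) (hI2 : I (e0 ^ 2) = 1)
    (hI1 : I 1 = 0) (hI0 : I e0 = 0) (hIv : ∀ v, I (e v) = 0)
    (a b : ℚ) (c : V → ℚ) (d : ℚ) : I (NF e0 e a b c d) = d := by
  simp only [NF, Algebra.algebraMap_eq_smul_one, smul_mul_assoc, one_mul, map_add,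
    map_smul, map_sum, hI1, hI0, hI2, hIv, smul_eq_mul, mul_zero, mul_one,
    Finset.sum_const_zero, add_zero, zero_add]

end NFsec

theorem chi_one_formula (R : Type*) [CommRing R] [Algebra ℚ R]
    (V : Type*) [Fintype V] (L : Type*) [Fintype L] (e0 : R) (e : V → R)
    (h0 : e0 ^ 3 = 0) (h0v : ∀ v, e0 * e v = 0)
    (hvw : ∀ v w, v ≠ w → e v * e w = 0)
    (hv2 : ∀ v, e v ^ 2 = -e0 ^ 2)
    (I : R →ₗ[ℚ] ℚ) (hI2 : I (e0 ^ 2) = 1) (hI1 : I 1 = 0) (hI0 : I e0 = 0)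
    (hIv : ∀ v, I (e v) = 0)
    (dl : L → ℤ) (mvl : V → L → ℤ) (u0 : ℤ) (u : V → ℤ)
    (dred : ℤ) (hdred : dred = ∑ l : L, dl l)
    (m : V → ℤ) (hm : ∀ v, m v = ∑ l : L, mvl v l)
    (ch1 chU Td : R)
    (hch1 : ch1 = 2 - (∑ v : V, ((m v : R) - 2) * e v + ((dred : R) - 3) * e0) +
      (∑ v : V, algebraMap ℚ R ((2 - ∑ l : L, (mvl v l : ℚ) ^ 2) / 2) * e v ^ 2 +
        algebraMap ℚ R ((3 - ∑ l : L, (dl l : ℚ) ^ 2) / 2) * e0 ^ 2))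
    (hchU : chU = 1 + ((u0 : R) * e0 + ∑ v : V, (u v : R) * e v) +
      (1 / 2 : ℚ) • ((u0 : R) ^ 2 * e0 ^ 2 + ∑ v : V, (u v : R) ^ 2 * e v ^ 2))
    (hTd : Td = 1 - (1 / 2 : ℚ) • (∑ v : V, e v + 3 * e0) + e0 ^ 2) :
    I (ch1 * chU * Td) =
      -((u0 : ℚ) - 1) * ((dred : ℚ) - u0 - 1) +
        ∑ v : V, (u v : ℚ) * ((m v : ℚ) - u v - 1) -
        ∑ l : L, C2 (dl l) + ∑ v : V, ∑ l : L, C2 (mvl v l) := by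
  have hch1' : ch1 = NF e0 e 2 (3 - (dred : ℚ)) (fun v => 2 - (m v : ℚ))
      ((3 - ∑ l : L, (dl l : ℚ) ^ 2) / 2 - ∑ v : V, (2 - ∑ l : L, (mvl v l : ℚ) ^ 2) / 2) := by
    rw [hch1, NF]
    have hsq : ∑ v : V, algebraMap ℚ R ((2 - ∑ l : L, (mvl v l : ℚ) ^ 2) / 2) * e v ^ 2
        = -(algebraMap ℚ R (∑ v : V, (2 - ∑ l : L, (mvl v l : ℚ) ^ 2) / 2) * e0 ^ 2) := by
      rw [map_sum, Finset.sum_mul, ← Finset.sum_neg_distrib]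
      exact Finset.sum_congr rfl fun v _ => by rw [hv2, mul_neg]
    rw [hsq]
    have hsum : ∑ v : V, algebraMap ℚ R (2 - (m v : ℚ)) * e v
        = -∑ v : V, ((m v : R) - 2) * e v := by
      rw [← Finset.sum_neg_distrib]
      refine Finset.sum_congr rfl fun v _ => ?_
      rw [map_sub, map_intCast, map_ofNat]; ring
    rw [hsum]
    simp only [map_sub, map_intCast, map_ofNat]
    ring
  have hchU' : chU = NF e0 e 1 (u0 : ℚ) (fun v => (u v : ℚ))
      ((1 / 2 : ℚ) * ((u0 : ℚ) ^ 2 - ∑ v : V, (u v : ℚ) ^ 2)) := by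
    rw [hchU, NF]
    have hsq2 : ∑ v : V, (u v : R) ^ 2 * e v ^ 2 = (∑ v : V, (u v : R) ^ 2) * (-e0 ^ 2) := by
      rw [Finset.sum_mul]
      exact Finset.sum_congr rfl fun v _ => by rw [hv2]
    rw [hsq2, Algebra.smul_def]
    simp only [map_mul, map_sub, map_pow, map_sum, map_intCast, map_one]
    ring
  have hTd' : Td = NF e0 e 1 (-(3 * (1 / 2 : ℚ))) (fun _ => -(1 / 2 : ℚ)) 1 := by
    rw [hTd, NF, Algebra.smul_def]
    simp only [map_one, map_neg, map_mul, map_ofNat, neg_mul, Finset.sum_neg_distrib,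
      ← Finset.mul_sum]
    ring
  rw [hch1', hchU', hTd', NF_mul e0 e h0 h0v hvw hv2, NF_mul e0 e h0 h0v hvw hv2,
    I_NF e0 e I hI2 hI1 hI0 hIv]
  have h1 : ∑ v : V, (2 - ∑ l : L, (mvl v l : ℚ) ^ 2) / 2
      = (Fintype.card V : ℚ) - (∑ v : V, ∑ l : L, (mvl v l : ℚ) ^ 2) / 2 := by
    rw [Finset.sum_congr rfl (fun v _ => show (2 - ∑ l : L, (mvl v l : ℚ) ^ 2) / 2
        = 1 - (∑ l : L, (mvl v l : ℚ) ^ 2) / 2 by ring),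
      Finset.sum_sub_distrib, Finset.sum_const, Finset.sum_div, Finset.card_univ,
      nsmul_eq_mul, mul_one]
  have h2 : ∑ v : V, (2 - (m v : ℚ)) * (u v : ℚ)
      = 2 * (∑ v : V, (u v : ℚ)) - ∑ v : V, (m v : ℚ) * (u v : ℚ) := by
    rw [Finset.sum_congr rfl (fun v _ => show (2 - (m v : ℚ)) * (u v : ℚ)
        = 2 * (u v : ℚ) - (m v : ℚ) * (u v : ℚ) by ring),
      Finset.sum_sub_distrib, ← Finset.mul_sum]
  have h3 : ∑ v : V, (2 * (u v : ℚ) + (2 - (m v : ℚ)) * 1) * -(1 / 2)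
      = -(∑ v : V, (u v : ℚ)) - (Fintype.card V : ℚ) + (∑ v : V, (m v : ℚ)) / 2 := by
    rw [Finset.sum_congr rfl (fun v _ => show (2 * (u v : ℚ) + (2 - (m v : ℚ)) * 1) * -(1 / 2)
        = -(u v : ℚ) - 1 + (m v : ℚ) / 2 by ring),
      Finset.sum_add_distrib, Finset.sum_sub_distrib, Finset.sum_neg_distrib,
      Finset.sum_const, Finset.sum_div, Finset.card_univ, nsmul_eq_mul, mul_one]
  have h4 : ∑ l : L, C2 (dl l) = (∑ l : L, (dl l : ℚ) ^ 2) / 2 - (dred : ℚ) / 2 := by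
    rw [hdred]
    push_cast
    rw [Finset.sum_div, Finset.sum_div, ← Finset.sum_sub_distrib]
    exact Finset.sum_congr rfl fun l _ => by simp only [C2]; ring
  have h5 : ∑ v : V, ∑ l : L, C2 (mvl v l)
      = (∑ v : V, ∑ l : L, (mvl v l : ℚ) ^ 2) / 2 - (∑ v : V, (m v : ℚ)) / 2 := by
    rw [Finset.sum_div, Finset.sum_div, ← Finset.sum_sub_distrib]
    refine Finset.sum_congr rfl fun v _ => ?_
    rw [hm v]
    push_cast
    rw [Finset.sum_div, Finset.sum_div, ← Finset.sum_sub_distrib]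
    exact Finset.sum_congr rfl fun l _ => by simp only [C2]; ring
  have h6 : ∑ v : V, (u v : ℚ) * ((m v : ℚ) - (u v : ℚ) - 1)
      = (∑ v : V, (m v : ℚ) * (u v : ℚ)) - (∑ v : V, (u v : ℚ) ^ 2) - ∑ v : V, (u v : ℚ) := by
    rw [Finset.sum_congr rfl (fun v _ => show (u v : ℚ) * ((m v : ℚ) - (u v : ℚ) - 1)
        = (m v : ℚ) * (u v : ℚ) - (u v : ℚ) ^ 2 - (u v : ℚ) by ring),
      Finset.sum_sub_distrib, Finset.sum_sub_distrib]
  rw [h1, h2, h3, h4, h5, h6]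
  ring
end

section
/- Let L and V be finite sets, d_l ≥ 1 (l ∈ L) integers with d = ∑_l d_l ≥ 1, and m_{v,l} ≥ 0 integers with m_v = ∑_{l∈L} m_{v,l} for v ∈ V. Then ∑_{j=1}^{d} [ (C(j-1,2) - ∑_v C(⌈jm_v/d⌉-1,2)) + ((j-1)(d-j-1) + ∑_l C(d_l,2) - ∑_v ((⌈jm_v/d⌉-1)(m_v-⌈jm_v/d⌉) + ∑_{l} C(m_{v,l},2))) + (C(d-j-1,2) - ∑_v C(m_v - ⌈jm_v/d⌉, 2) - δ_{j,d}) ] = d·(C(d-2,2) + ∑_{l∈L} C(d_l,2) - ∑_{v∈V} (C(m_v-1,2) + ∑_{l∈L} C(m_{v,l},2))) - 1, where C(t,2) = t(t-1)/2 for any integer t and δ_{j,d} = 1 iff j = d. -/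
open Finset

theorem total_spectrum_sum (L V : Type*) [Fintype L] [Fintype V]
    (dl : L → ℤ) (hdl : ∀ l, 1 ≤ dl l)
    (d : ℤ) (hd : d = ∑ l : L, dl l) (hd1 : 1 ≤ d)
    (mvl : V → L → ℤ) (hmvl : ∀ v l, 0 ≤ mvl v l)
    (mv : V → ℤ) (hmv : ∀ v, mv v = ∑ l : L, mvl v l) :
    (∑ j ∈ Finset.Icc (1 : ℤ) d,
      ((C2 (j - 1) - ∑ v : V, C2 (⌈(j * mv v : ℚ) / d⌉ - 1)) +
       (((j : ℚ) - 1) * ((d : ℚ) - j - 1) + ∑ l : L, C2 (dl l) -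
         ∑ v : V, (((⌈(j * mv v : ℚ) / d⌉ : ℚ) - 1) * ((mv v : ℚ) - (⌈(j * mv v : ℚ) / d⌉ : ℚ)) +
           ∑ l : L, C2 (mvl v l))) +
       (C2 (d - j - 1) - (∑ v : V, C2 (mv v - ⌈(j * mv v : ℚ) / d⌉)) -
         (if j = d then 1 else 0)))) =
    (d : ℚ) * (C2 (d - 2) + ∑ l : L, C2 (dl l) -
      ∑ v : V, (C2 (mv v - 1) + ∑ l : L, C2 (mvl v l))) - 1 := by
  set E : ℚ := C2 (d - 2) + ∑ l : L, C2 (dl l) -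
      ∑ v : V, (C2 (mv v - 1) + ∑ l : L, C2 (mvl v l)) with hE
  have key : ∀ j ∈ Finset.Icc (1 : ℤ) d,
      ((C2 (j - 1) - ∑ v : V, C2 (⌈(j * mv v : ℚ) / d⌉ - 1)) +
       (((j : ℚ) - 1) * ((d : ℚ) - j - 1) + ∑ l : L, C2 (dl l) -
         ∑ v : V, (((⌈(j * mv v : ℚ) / d⌉ : ℚ) - 1) * ((mv v : ℚ) - (⌈(j * mv v : ℚ) / d⌉ : ℚ)) +
           ∑ l : L, C2 (mvl v l))) +
       (C2 (d - j - 1) - (∑ v : V, C2 (mv v - ⌈(j * mv v : ℚ) / d⌉)) -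
         (if j = d then 1 else 0))) = E - (if j = d then 1 else 0) := by
    intro j _
    have h1 : C2 (j - 1) + ((j : ℚ) - 1) * ((d : ℚ) - j - 1) + C2 (d - j - 1) = C2 (d - 2) := by
      simp only [C2]; push_cast; ring
    have h2 : (∑ v : V, C2 (⌈(j * mv v : ℚ) / d⌉ - 1)) +
        (∑ v : V, (((⌈(j * mv v : ℚ) / d⌉ : ℚ) - 1) * ((mv v : ℚ) - (⌈(j * mv v : ℚ) / d⌉ : ℚ)) +
           ∑ l : L, C2 (mvl v l))) +
        (∑ v : V, C2 (mv v - ⌈(j * mv v : ℚ) / d⌉)) =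
        ∑ v : V, (C2 (mv v - 1) + ∑ l : L, C2 (mvl v l)) := by
      rw [← Finset.sum_add_distrib, ← Finset.sum_add_distrib]
      refine Finset.sum_congr rfl fun v _ => ?_
      simp only [C2]; push_cast; ring
    rw [hE]
    linarith [h1, h2]
  rw [Finset.sum_congr rfl key, Finset.sum_sub_distrib, Finset.sum_const,
    Finset.sum_ite_eq' (Finset.Icc (1 : ℤ) d) d (fun _ => (1 : ℚ))]
  have hdmem : d ∈ Finset.Icc (1 : ℤ) d := by simp [hd1]
  rw [if_pos hdmem, Int.card_Icc]
  have : ((d + 1 - 1).toNat : ℚ) = (d : ℚ) := by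
    have h : d + 1 - 1 = d := by ring
    rw [h]
    exact_mod_cast congrArg (Int.cast : ℤ → ℚ) (Int.toNat_of_nonneg (by omega : (0:ℤ) ≤ d))
  rw [nsmul_eq_mul, this]
end
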